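/- arXiv:1705.02152 — 2 statements merged into one kernel-verified Lean document; each statement's English description precedes it below -/
import Mathlib

section
/- Let (Ω, F, P) be a probability space, let p be a positive even integer, let I be a nonempty finite index set with |I| = L, for each i ∈ I let J_i be a nonempty finite index set, and let Y_{i,j} : Ω → ℝ be integrable random variables with Y_{i,j}^p integrable. Then E[ max_{i ∈ I} min_{j ∈ J_i} Y_{i,j} ] ≤ ( Σ_{i ∈ I} Σ_{j ∈ J_i} E[ Y_{i,j}^p ] )^{1/p}. -/
open MeasureTheory

private lemma integrable_sup' {Ω : Type*} [MeasurableSpace Ω] (P : Measure Ω)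
    {ι : Type*} (s : Finset ι) (hs : s.Nonempty) (f : ι → Ω → ℝ)
    (hf : ∀ i, Integrable (f i) P) :
    Integrable (fun ω => s.sup' hs (fun i => f i ω)) P := by
  induction hs using Finset.Nonempty.cons_induction with
  | singleton i => simp only [Finset.sup'_singleton]; exact hf i
  | cons i s hi hs ih =>
      simp only [Finset.sup'_cons hs]
      exact (hf i).sup ih

private lemma integrable_inf' {Ω : Type*} [MeasurableSpace Ω] (P : Measure Ω)
    {ι : Type*} (s : Finset ι) (hs : s.Nonempty) (f : ι → Ω → ℝ)
    (hf : ∀ i, Integrable (f i) P) :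
    Integrable (fun ω => s.inf' hs (fun i => f i ω)) P := by
  induction hs using Finset.Nonempty.cons_induction with
  | singleton i => simp only [Finset.inf'_singleton]; exact hf i
  | cons i s hi hs ih =>
      simp only [Finset.inf'_cons hs]
      exact (hf i).inf ih

/-- Inequality (15) of the paper: for a positive even integer `p`,
`E[max_i min_j Y i j] ≤ (∑ i ∑ j, E[(Y i j)^p])^(1/p)`. -/
theorem stmt_6 {Ω : Type*} [MeasurableSpace Ω] (P : Measure Ω) [IsProbabilityMeasure P]
    {p : ℕ} (hp : 0 < p) (hpeven : Even p)
    {I : Type*} [Fintype I] [Nonempty I] (L : ℕ) (hL : Fintype.card I = L)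
    {J : I → Type*} [∀ i, Fintype (J i)] [∀ i, Nonempty (J i)]
    (Y : ∀ i, J i → Ω → ℝ) (hmeas : ∀ i j, Measurable (Y i j))
    (hint : ∀ i j, Integrable (Y i j) P)
    (hintp : ∀ i j, Integrable (fun ω => (Y i j ω) ^ p) P) :
    (∫ ω, Finset.univ.sup' Finset.univ_nonempty
        (fun i => Finset.univ.inf' Finset.univ_nonempty (fun j => Y i j ω)) ∂P) ≤
      (∑ i, ∑ j, ∫ ω, (Y i j ω) ^ p ∂P) ^ ((1 : ℝ) / p) := by
  have hppos : (0 : ℝ) < (p : ℝ) := by exact_mod_cast hp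
  have hexp_pos : (0 : ℝ) < 1 / p := by positivity
  have hexp_le : (1 : ℝ) / p ≤ 1 := by
    rw [div_le_one hppos]; exact_mod_cast hp
  set g : Ω → ℝ := fun ω => ∑ i, ∑ j, (Y i j ω) ^ p with hg
  have hg_nonneg : ∀ ω, 0 ≤ g ω := fun ω =>
    Finset.sum_nonneg fun i _ => Finset.sum_nonneg fun j _ => hpeven.pow_nonneg _
  have hg_int : Integrable g P := by
    apply integrable_finset_sum _ fun i _ => integrable_finset_sum _ fun j _ => hintp i j
  have hg_meas : Measurable g :=
    Finset.measurable_sum _ fun i _ => Finset.measurable_sum _ fun j _ => (hmeas i j).pow_const p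
  have hcont : Continuous fun x : ℝ => x ^ ((1 : ℝ) / p) :=
    continuous_iff_continuousAt.2 fun x =>
      Real.continuousAt_rpow_const x _ (Or.inr hexp_pos.le)
  -- pointwise bound
  have hpt : ∀ ω, Finset.univ.sup' Finset.univ_nonempty
      (fun i => Finset.univ.inf' Finset.univ_nonempty (fun j => Y i j ω)) ≤ g ω ^ ((1 : ℝ) / p) := by
    intro ω
    apply Finset.sup'_le
    intro i _
    obtain ⟨j⟩ := (inferInstance : Nonempty (J i))
    refine le_trans (Finset.inf'_le _ (Finset.mem_univ j)) ?_
    have h1 : Y i j ω ≤ |Y i j ω| := le_abs_self _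
    have h2 : |Y i j ω| = (|Y i j ω| ^ p) ^ ((1 : ℝ) / p) := by
      rw [← Real.rpow_natCast |Y i j ω| p, ← Real.rpow_mul (abs_nonneg _),
        mul_one_div, div_self hppos.ne', Real.rpow_one]
    have h3 : |Y i j ω| ^ p ≤ g ω := by
      rw [hpeven.pow_abs]
      calc (Y i j ω) ^ p ≤ ∑ j', (Y i j' ω) ^ p :=
            Finset.single_le_sum (f := fun j' => (Y i j' ω) ^ p)
              (fun j' _ => hpeven.pow_nonneg _) (Finset.mem_univ j)
        _ ≤ g ω := Finset.single_le_sum (f := fun i' => ∑ j' : J i', (Y i' j' ω) ^ p)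
            (fun i' (_ : i' ∈ Finset.univ) => Finset.sum_nonneg fun j' _ => hpeven.pow_nonneg _)
            (Finset.mem_univ i)
    calc Y i j ω ≤ |Y i j ω| := h1
      _ = (|Y i j ω| ^ p) ^ ((1 : ℝ) / p) := h2
      _ ≤ g ω ^ ((1 : ℝ) / p) :=
          Real.rpow_le_rpow (pow_nonneg (abs_nonneg _) _) h3 hexp_pos.le
  -- integrability of the composed function
  have hcomp_int : Integrable (fun ω => g ω ^ ((1 : ℝ) / p)) P := by
    have hb : Integrable (fun ω => g ω + 1) P := hg_int.add (integrable_const 1)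
    refine Integrable.mono hb ?_ ?_
    · exact (hcont.measurable.comp hg_meas).aestronglyMeasurable
    · refine Filter.Eventually.of_forall fun ω => ?_
      rw [Real.norm_eq_abs, abs_of_nonneg (Real.rpow_nonneg (hg_nonneg ω) _),
        Real.norm_eq_abs, abs_of_nonneg (by linarith [hg_nonneg ω] : (0:ℝ) ≤ g ω + 1)]
      rcases le_or_gt (g ω) 1 with h | h
      · calc g ω ^ ((1:ℝ)/p) ≤ 1 := Real.rpow_le_one (hg_nonneg ω) h hexp_pos.le
          _ ≤ g ω + 1 := by linarith [hg_nonneg ω]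
      · calc g ω ^ ((1:ℝ)/p) ≤ g ω ^ (1:ℝ) :=
              Real.rpow_le_rpow_of_exponent_le h.le hexp_le
          _ = g ω := Real.rpow_one _
          _ ≤ g ω + 1 := by linarith
  -- integrability of the sup' inf'
  have hM_int : Integrable (fun ω => Finset.univ.sup' Finset.univ_nonempty
      (fun i => Finset.univ.inf' Finset.univ_nonempty (fun j => Y i j ω))) P :=
    integrable_sup' P _ _ _ fun i => integrable_inf' P _ _ _ fun j => hint i j
  -- Jensen
  have hconc : ConcaveOn ℝ (Set.Ici 0) (fun x : ℝ => x ^ ((1 : ℝ) / p)) :=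
    Real.concaveOn_rpow hexp_pos.le hexp_le
  have hjensen : (∫ ω, g ω ^ ((1 : ℝ) / p) ∂P) ≤ (∫ ω, g ω ∂P) ^ ((1 : ℝ) / p) :=
    hconc.le_map_integral hcont.continuousOn isClosed_Ici
      (Filter.Eventually.of_forall fun ω => hg_nonneg ω) hg_int hcomp_int
  have hsum : (∫ ω, g ω ∂P) = ∑ i, ∑ j, ∫ ω, (Y i j ω) ^ p ∂P := by
    rw [integral_finset_sum _ fun i _ => integrable_finset_sum _ fun j _ => hintp i j]
    exact Finset.sum_congr rfl fun i _ =>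
      integral_finset_sum _ fun j _ => hintp i j
  calc (∫ ω, Finset.univ.sup' Finset.univ_nonempty
        (fun i => Finset.univ.inf' Finset.univ_nonempty (fun j => Y i j ω)) ∂P)
      ≤ ∫ ω, g ω ^ ((1 : ℝ) / p) ∂P := integral_mono hM_int hcomp_int hpt
    _ ≤ (∫ ω, g ω ∂P) ^ ((1 : ℝ) / p) := hjensen
    _ = (∑ i, ∑ j, ∫ ω, (Y i j ω) ^ p ∂P) ^ ((1 : ℝ) / p) := by rw [hsum]
end

section
/- Let (Ω, F, P) be a probability space, let p be a positive even integer, let I be a nonempty finite index set, for each i ∈ I let J_i be a nonempty finite index set, and let Y_{i,j} : Ω → ℝ be integrable random variables with Y_{i,j}^p integrable. Then E[ min_{i ∈ I} max_{j ∈ J_i} Y_{i,j} ] ≤ min_{i ∈ I} ( Σ_{j ∈ J_i} E[ Y_{i,j}^p ] )^{1/p}. -/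
open MeasureTheory

private lemma integrable_sup'_aux {Ω : Type*} [MeasurableSpace Ω] (P : Measure Ω)
    {ι : Type*} (s : Finset ι) (hs : s.Nonempty) (f : ι → Ω → ℝ)
    (h : ∀ i ∈ s, Integrable (f i) P) :
    Integrable (fun ω => s.sup' hs (fun i => f i ω)) P := by
  induction hs using Finset.Nonempty.cons_induction with
  | singleton a => simpa using h a (by simp)
  | cons a s ha hs ih =>
      simp only [Finset.sup'_cons (H := hs)]
      exact (h a (by simp)).sup (ih (fun i hi => h i (Finset.mem_cons_of_mem hi)))

private lemma integrable_inf'_aux {Ω : Type*} [MeasurableSpace Ω] (P : Measure Ω)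
    {ι : Type*} (s : Finset ι) (hs : s.Nonempty) (f : ι → Ω → ℝ)
    (h : ∀ i ∈ s, Integrable (f i) P) :
    Integrable (fun ω => s.inf' hs (fun i => f i ω)) P := by
  induction hs using Finset.Nonempty.cons_induction with
  | singleton a => simpa using h a (by simp)
  | cons a s ha hs ih =>
      simp only [Finset.inf'_cons (H := hs)]
      exact (h a (by simp)).inf (ih (fun i hi => h i (Finset.mem_cons_of_mem hi)))

private lemma measurable_sup'_aux {Ω : Type*} [MeasurableSpace Ω]
    {ι : Type*} (s : Finset ι) (hs : s.Nonempty) (f : ι → Ω → ℝ)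
    (h : ∀ i ∈ s, Measurable (f i)) :
    Measurable (fun ω => s.sup' hs (fun i => f i ω)) := by
  induction hs using Finset.Nonempty.cons_induction with
  | singleton a => simpa using h a (by simp)
  | cons a s ha hs ih =>
      simp only [Finset.sup'_cons (H := hs)]
      exact (h a (by simp)).sup (ih (fun i hi => h i (Finset.mem_cons_of_mem hi)))

/-- Inequality (16) of the paper: for a positive even integer `p`,
`E[min_i max_j Y i j] ≤ min_i (∑ j, E[(Y i j)^p])^(1/p)`. -/
theorem stmt_7 {Ω : Type*} [MeasurableSpace Ω] (P : Measure Ω) [IsProbabilityMeasure P]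
    {p : ℕ} (hp : 0 < p) (hpeven : Even p)
    {I : Type*} [Fintype I] [Nonempty I]
    {J : I → Type*} [∀ i, Fintype (J i)] [∀ i, Nonempty (J i)]
    (Y : ∀ i, J i → Ω → ℝ) (hmeas : ∀ i j, Measurable (Y i j))
    (hint : ∀ i j, Integrable (Y i j) P)
    (hintp : ∀ i j, Integrable (fun ω => (Y i j ω) ^ p) P) :
    (∫ ω, Finset.univ.inf' Finset.univ_nonempty
        (fun i => Finset.univ.sup' Finset.univ_nonempty (fun j => Y i j ω)) ∂P) ≤
      Finset.univ.inf' Finset.univ_nonempty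
        (fun i => (∑ j, ∫ ω, (Y i j ω) ^ p ∂P) ^ ((1 : ℝ) / p)) := by
  set g : ∀ i, Ω → ℝ := fun i ω => Finset.univ.sup' Finset.univ_nonempty (fun j => Y i j ω)
    with hg
  have hgint : ∀ i, Integrable (g i) P := fun i =>
    integrable_sup'_aux P _ _ _ (fun j _ => hint i j)
  have hinfint : Integrable
      (fun ω => Finset.univ.inf' Finset.univ_nonempty (fun i => g i ω)) P :=
    integrable_inf'_aux P _ _ _ (fun i _ => hgint i)
  apply Finset.le_inf'
  intro i _
  -- pointwise bound : (g i ω)^p ≤ ∑ j, (Y i j ω)^p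
  have hpw : ∀ ω, (g i ω) ^ p ≤ ∑ j, (Y i j ω) ^ p := by
    intro ω
    obtain ⟨j₀, -, hj₀⟩ := Finset.exists_mem_eq_sup' (Finset.univ_nonempty (α := J i))
        (fun j => Y i j ω)
    rw [show g i ω = Y i j₀ ω from hj₀]
    exact Finset.single_le_sum (f := fun j => (Y i j ω) ^ p)
      (fun j _ => hpeven.pow_nonneg _) (Finset.mem_univ j₀)
  have hsumint : Integrable (fun ω => ∑ j, (Y i j ω) ^ p) P :=
    integrable_finset_sum _ (fun j _ => hintp i j)
  have hgp_int : Integrable (fun ω => (g i ω) ^ p) P := by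
    refine hsumint.mono' ?_ ?_
    · exact ((measurable_sup'_aux _ _ _ (fun j _ => hmeas i j)).pow_const p).aestronglyMeasurable
    · filter_upwards with ω
      rw [Real.norm_eq_abs, abs_pow, hpeven.pow_abs]
      exact hpw ω
  -- step 1 : ∫ inf' ≤ ∫ g i
  have h1 : (∫ ω, Finset.univ.inf' Finset.univ_nonempty (fun i => g i ω) ∂P)
      ≤ ∫ ω, g i ω ∂P := by
    refine integral_mono hinfint (hgint i) (fun ω => ?_)
    exact Finset.inf'_le _ (Finset.mem_univ i)
  -- step 2 : Jensen : (∫ g i)^p ≤ ∫ (g i)^p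
  have hJensen : (∫ ω, g i ω ∂P) ^ p ≤ ∫ ω, (g i ω) ^ p ∂P := by
    have hconv : ConvexOn ℝ Set.univ (fun x : ℝ => x ^ p) := hpeven.convexOn_pow
    exact hconv.map_integral_le (continuous_pow p).continuousOn isClosed_univ
      (Filter.Eventually.of_forall (fun ω => Set.mem_univ _)) (hgint i) hgp_int
  have h2 : ∫ ω, (g i ω) ^ p ∂P ≤ ∑ j, ∫ ω, (Y i j ω) ^ p ∂P := by
    rw [← integral_finset_sum _ (fun j _ => hintp i j)]
    exact integral_mono hgp_int hsumint hpw
  -- combine via rpow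
  have hEp : (∫ ω, g i ω ∂P) ^ p ≤ ∑ j, ∫ ω, (Y i j ω) ^ p ∂P := hJensen.trans h2
  have hnn : (0 : ℝ) ≤ (∫ ω, g i ω ∂P) ^ p := hpeven.pow_nonneg _
  have hrpow : ((∫ ω, g i ω ∂P) ^ p) ^ ((1 : ℝ) / p)
      ≤ (∑ j, ∫ ω, (Y i j ω) ^ p ∂P) ^ ((1 : ℝ) / p) :=
    Real.rpow_le_rpow hnn hEp (by positivity)
  have habs : ((∫ ω, g i ω ∂P) ^ p) ^ ((1 : ℝ) / p) = |∫ ω, g i ω ∂P| := by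
    rw [← hpeven.pow_abs, ← Real.rpow_natCast |∫ ω, g i ω ∂P| p,
      ← Real.rpow_mul (abs_nonneg _)]
    rw [mul_one_div, div_self (by exact_mod_cast hp.ne' : (p : ℝ) ≠ 0), Real.rpow_one]
  calc (∫ ω, Finset.univ.inf' Finset.univ_nonempty (fun i => g i ω) ∂P)
      ≤ ∫ ω, g i ω ∂P := h1
    _ ≤ |∫ ω, g i ω ∂P| := le_abs_self _
    _ = ((∫ ω, g i ω ∂P) ^ p) ^ ((1 : ℝ) / p) := habs.symm
    _ ≤ (∑ j, ∫ ω, (Y i j ω) ^ p ∂P) ^ ((1 : ℝ) / p) := hrpow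
end
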